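/- Let α ∈ (0,1) be irrational and not of bounded type, i.e., for every ε > 0 there exist integers p and q ≥ 1 with |α − p/q| ≤ ε/q² (equivalently, the partial quotients of the continued fraction expansion of α are unbounded). Then the Sturmian subshift (Ξ(α), D) is not f-embeddable: for every L ∈ ℕ, every c ≥ 1 and every map φ : Ξ(α) → ℝ^L, the bounds (1/c)·D(y,z) ≤ ‖φ(y) − φ(z)‖ ≤ c·D(y,z) fail for some y, z ∈ Ξ(α). -/

import Mathlib

-- The combinatorial metric on `A^ℤ`: `D(y,y) = 0`, and for `y ≠ z`,
-- `D(y,z) = 1/(N+1)` where `N = min{|n| : y(n) ≠ z(n)}`.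
open Classical in
noncomputable def combDist {A : Type*} (y z : ℤ → A) : ℝ :=
  if h : y = z then 0
  else
    have hex : ∃ N : ℕ, y (N : ℤ) ≠ z (N : ℤ) ∨ y (-(N : ℤ)) ≠ z (-(N : ℤ)) := by
      obtain ⟨n, hn⟩ := Function.ne_iff.mp h
      refine ⟨n.natAbs, ?_⟩
      rcases Int.natAbs_eq n with h1 | h1
      · exact Or.inl (by rwa [← h1])
      · exact Or.inr (by rwa [← h1])
    1 / ((Nat.find hex : ℝ) + 1)

/-- The shift orbit of a two-sided sequence. -/
def shiftOrbit {A : Type*} (x : ℤ → A) : Set (ℤ → A) :=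
  {y | ∃ j : ℤ, y = fun m => x (m + j)}

/-- A subset `Ξ` of `A^ℤ`, with the combinatorial metric, is f-embeddable if
there is a bi-Lipschitz map from `Ξ` into some finite-dimensional Euclidean
space. -/
def FEmbeddableSubshift {A : Type*} (Ξ : Set (ℤ → A)) : Prop :=
  ∃ (L : ℕ) (c : ℝ) (φ : Ξ → EuclideanSpace ℝ (Fin L)),
    1 ≤ c ∧ ∀ y z : Ξ,
      (1 / c) * combDist (y : ℤ → A) (z : ℤ → A) ≤ ‖φ y - φ z‖ ∧
      ‖φ y - φ z‖ ≤ c * combDist (y : ℤ → A) (z : ℤ → A)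

/-- The Sturmian sequence of parameter `α`: `x_α(n) = ⌊(n+1)α⌋ − ⌊nα⌋`, which for
irrational `α ∈ (0,1)` takes the values `0` and `1`. -/
noncomputable def sturmianSeq (α : ℝ) (n : ℤ) : Fin 2 :=
  if ⌊((n : ℝ) + 1) * α⌋ - ⌊(n : ℝ) * α⌋ = 1 then 1 else 0

/-- The Sturmian subshift of parameter `α`: the closure of the shift orbit of the
Sturmian sequence `x_α` for the product topology. -/
noncomputable def sturmianSubshift (α : ℝ) : Set (ℤ → Fin 2) :=
  closure (shiftOrbit (sturmianSeq α))

/-!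
Write `‖x‖` for the distance from `x` to the nearest integer. If the partial quotients of `α`
are unbounded, then for every `K` there is an `e ≠ 0` with `|e| ‖eα‖` as small as we like, and
since `|m b - q a| ≥ 1` for distinct integer approximations `a/m`, `b/q` of `α`, this forces
`‖kα‖ > ‖eα‖` for all `|e| < |k| ≤ 3K|e|`. The Sturmian sequence can only change between
positions `m` and `m + e` when `‖(m + e)α‖` or `‖(m + e + 1)α‖` is smaller than `‖eα‖`, so the
`K + 1` shifts of `x_α` by `ie`, `K ≤ i ≤ 2K`, all agree on `|n| < K|e| - 1`, while any two of
them differ at some `|n| ≤ 2K|e|`. Hence `Ξ(α)` contains arbitrarily large families whose mutual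
distances lie in `[a, 3a]`. A bi-Lipschitz map to `ℝ^L` would turn them, after rescaling, into
arbitrarily large `1`-separated families in a fixed ball, contradicting its compactness.
-/

open Metric in
theorem exists_card_le_of_separated_of_subset_closedBall {E : Type*} [NormedAddCommGroup E]
    [NormedSpace ℝ E] [ProperSpace E] (C : ℝ) :
    ∃ N : ℕ, ∀ {ι : Type*} [Fintype ι] (v : ι → E) (x : E) {a : ℝ}, 0 < a →
      (∀ i, dist (v i) x ≤ C * a) → Pairwise (fun i j => a ≤ dist (v i) (v j)) →
      Fintype.card ι ≤ N := by
  obtain ⟨T, -, hT, hcover⟩ :=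
    finite_cover_balls_of_compact (isCompact_closedBall (0 : E) C) one_half_pos
  refine ⟨hT.toFinset.card, fun {ι} _ v x a ha hball hsep => ?_⟩
  by_contra! hcard
  set w : ι → E := fun i => a⁻¹ • (v i - x)
  have hdist (i j : ι) : dist (w i) (w j) = a⁻¹ * dist (v i) (v j) := by
    rw [dist_eq_norm, ← smul_sub, sub_sub_sub_cancel_right, norm_smul,
      Real.norm_of_nonneg (inv_nonneg.2 ha.le), dist_eq_norm]
  have hw (i : ι) : w i ∈ closedBall (0 : E) C := by
    rw [mem_closedBall, dist_zero_right, norm_smul, Real.norm_of_nonneg (inv_nonneg.2 ha.le),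
      ← dist_eq_norm, inv_mul_le_iff₀ ha, mul_comm]
    exact hball i
  choose t ht hwt using fun i => Set.mem_iUnion₂.1 (hcover (hw i))
  obtain ⟨i, j, hij, htij⟩ := Fintype.exists_ne_map_eq_of_card_lt
    (fun i => (⟨t i, hT.mem_toFinset.2 (ht i)⟩ : hT.toFinset)) (by simpa using hcard)
  have hfar : 1 ≤ dist (w i) (w j) := by
    rw [hdist, le_inv_mul_iff₀ ha, mul_one]
    exact hsep hij
  have hnear : dist (w i) (w j) < 1 := by
    have htij' : t i = t j := congrArg Subtype.val htij
    have hj := hwt j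
    rw [← htij'] at hj
    linarith [dist_triangle_right (w i) (w j) (t i), mem_ball.1 (hwt i), mem_ball.1 hj]
  linarith

open Classical in
theorem combDist_le_of_eqOn {A : Type*} {y z : ℤ → A} {N : ℕ}
    (h : Set.EqOn y z (Set.Ioo (-N) N)) : combDist y z ≤ 1 / (N + 1) := by
  by_cases hyz : y = z
  · simp only [combDist, dif_pos hyz]; positivity
  simp only [combDist, dif_neg hyz]
  gcongr
  norm_cast
  refine Nat.le_find_iff _ _ |>.2 fun m hm hne => ?_
  rcases hne with hne | hne
  · exact hne (h ⟨by omega, by omega⟩)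
  · exact hne (h ⟨by omega, by omega⟩)

open Classical in
theorem one_div_le_combDist {A : Type*} {y z : ℤ → A} {n : ℤ} (h : y n ≠ z n) :
    1 / (|(n : ℝ)| + 1) ≤ combDist y z := by
  have hyz : y ≠ z := fun hyz => h (congrFun hyz n)
  have hn : y (n.natAbs : ℤ) ≠ z n.natAbs ∨ y (-(n.natAbs : ℤ)) ≠ z (-(n.natAbs : ℤ)) := by
    rcases Int.natAbs_eq n with hn | hn
    · exact Or.inl (by rwa [← hn])
    · exact Or.inr (by rwa [← hn])
  simp only [combDist, dif_neg hyz]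
  gcongr
  rw [← Int.cast_abs, Int.abs_eq_natAbs, Int.cast_natCast]
  exact_mod_cast Nat.find_min' _ hn

theorem FEmbeddableSubshift.exists_card_le {A : Type*} {Ξ : Set (ℤ → A)}
    (h : FEmbeddableSubshift Ξ) (C : ℝ) :
    ∃ N : ℕ, ∀ (n : ℕ) (y : Fin (n + 1) → Ξ) {a : ℝ}, 0 < a →
      (∀ i j, combDist (y i : ℤ → A) (y j) ≤ C * a) →
      Pairwise (fun i j => a ≤ combDist (y i : ℤ → A) (y j)) → n + 1 ≤ N := by
  obtain ⟨L, c, φ, hc, hφ⟩ := h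
  have hc0 : 0 < c := one_pos.trans_le hc
  obtain ⟨N, hN⟩ := exists_card_le_of_separated_of_subset_closedBall
    (E := EuclideanSpace ℝ (Fin L)) (C * c ^ 2)
  refine ⟨N, fun n y a ha hdiam hsep => ?_⟩
  have hcard := hN (φ ∘ y) (φ (y 0)) (div_pos ha hc0) (fun i => ?_) (fun i j hij => ?_)
  · simpa using hcard
  · calc dist (φ (y i)) (φ (y 0)) ≤ c * combDist (y i : ℤ → A) (y 0) := by
          rw [dist_eq_norm]; exact (hφ _ _).2
      _ ≤ c * (C * a) := by gcongr; exact hdiam i 0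
      _ = C * c ^ 2 * (a / c) := by field_simp
  · calc a / c ≤ 1 / c * combDist (y i : ℤ → A) (y j) := by
          rw [one_div_mul_eq_div]; gcongr; exact hsep hij
      _ ≤ dist (φ (y i)) (φ (y j)) := by rw [dist_eq_norm]; exact (hφ _ _).1

noncomputable def distToInt (x : ℝ) : ℝ := |x - round x|

theorem distToInt_le (x : ℝ) (m : ℤ) : distToInt x ≤ |x - m| := round_le x m

theorem distToInt_eq_fract {x : ℝ} (h : Int.fract x ≤ 1 / 2) : distToInt x = Int.fract x := by
  rw [distToInt, abs_sub_round_eq_min, min_eq_left (by linarith)]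

theorem distToInt_mul_eq_or_one_le (α : ℝ) (m q : ℤ) :
    |(q : ℝ)| * distToInt (m * α) = |(m : ℝ)| * distToInt (q * α) ∨
      1 ≤ |(m : ℝ)| * distToInt (q * α) + |(q : ℝ)| * distToInt (m * α) := by
  set a := round ((m : ℝ) * α)
  set b := round ((q : ℝ) * α)
  have hdet : ((m * b - q * a : ℤ) : ℝ) = m * (b - q * α) + q * (m * α - a) := by push_cast; ring
  by_cases h : m * b - q * a = 0
  · left
    rw [h, Int.cast_zero] at hdet
    have : (q : ℝ) * (m * α - a) = m * (q * α - b) := by linear_combination -hdet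
    show |(q : ℝ)| * |m * α - a| = |(m : ℝ)| * |q * α - b|
    rw [← abs_mul, ← abs_mul, this]
  · right
    calc (1 : ℝ) ≤ |((m * b - q * a : ℤ) : ℝ)| := by exact_mod_cast Int.one_le_abs h
      _ ≤ |(m : ℝ) * (b - q * α)| + |(q : ℝ) * (m * α - a)| := by
          rw [hdet]; exact abs_add_le _ _
      _ = _ := by rw [abs_mul, abs_mul, abs_sub_comm]; rfl

theorem distToInt_lt_distToInt_mul (α : ℝ) {m q : ℤ} (hqm : |q| < |m|)
    (hpos : 0 < distToInt (q * α)) (hsmall : (|(m : ℝ)| + |(q : ℝ)|) * distToInt (q * α) < 1) :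
    distToInt (q * α) < distToInt (m * α) := by
  have hqm' : |(q : ℝ)| < |(m : ℝ)| := by simpa only [← Int.cast_abs] using (Int.cast_lt.2 hqm)
  have hq : 0 < |(q : ℝ)| := by
    rcases eq_or_ne q 0 with rfl | hq
    · simp [distToInt] at hpos
    · positivity
  refine lt_of_mul_lt_mul_left ?_ hq.le
  rcases distToInt_mul_eq_or_one_le α m q with h | h
  · rw [h]; exact mul_lt_mul_of_pos_right hqm' hpos
  · linarith

theorem exists_abs_eq_fract_mul_le {α η : ℝ} {p q : ℤ} (h : |q * α - p| ≤ η) :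
    ∃ e : ℤ, |e| = |q| ∧ Int.fract (e * α) ≤ η := by
  have fract_le {x : ℝ} {z : ℤ} (hz : (z : ℝ) ≤ x) : Int.fract x ≤ x - z := by
    rw [Int.fract, sub_le_sub_iff_left]; exact_mod_cast Int.le_floor.2 hz
  rcases le_total (p : ℝ) (q * α) with hp | hp
  · exact ⟨q, rfl, (fract_le hp).trans ((le_abs_self _).trans h)⟩
  · refine ⟨-q, abs_neg q, (fract_le (z := -p) (by push_cast; linarith)).trans ?_⟩
    rw [abs_sub_comm] at h
    push_cast
    linarith [le_abs_self ((p : ℝ) - q * α)]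

section Sturmian

variable {α : ℝ}

theorem sturmianSeq_eq_ite (hα : α ∈ Set.Ioo (0 : ℝ) 1) (n : ℤ) :
    sturmianSeq α n = if 1 - α ≤ Int.fract (n * α) then 1 else 0 := by
  have hsplit : ((n : ℝ) + 1) * α = ⌊(n : ℝ) * α⌋ + (Int.fract ((n : ℝ) * α) + α) := by
    linear_combination -Int.floor_add_fract ((n : ℝ) * α)
  have hjump : ⌊((n : ℝ) + 1) * α⌋ - ⌊(n : ℝ) * α⌋ = 1 ↔ 1 - α ≤ Int.fract (n * α) := by
    rw [hsplit, Int.floor_intCast_add, add_sub_cancel_left, Int.floor_eq_iff]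
    constructor
    · rintro ⟨h, -⟩
      push_cast at h
      linarith
    · intro h
      push_cast
      constructor <;> linarith [Int.fract_lt_one ((n : ℝ) * α), hα.2]
  simp only [sturmianSeq, hjump]

theorem sturmianSeq_add_eq (hα : α ∈ Set.Ioo (0 : ℝ) 1) {m e : ℤ}
    (h₁ : Int.fract (e * α) < distToInt ((m + e : ℤ) * α))
    (h₂ : Int.fract (e * α) < distToInt ((m + e + 1 : ℤ) * α)) :
    sturmianSeq α (m + e) = sturmianSeq α m := by
  set t := Int.fract ((m : ℝ) * α)
  set δ := Int.fract ((e : ℝ) * α)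
  have ht := Int.fract_lt_one ((m : ℝ) * α)
  have ht₀ := Int.fract_nonneg ((m : ℝ) * α)
  have hδ₀ := Int.fract_nonneg ((e : ℝ) * α)
  have hsum : ((m + e : ℤ) : ℝ) * α = ((⌊(m : ℝ) * α⌋ + ⌊(e : ℝ) * α⌋ : ℤ) : ℝ) + (t + δ) := by
    push_cast
    linear_combination -Int.floor_add_fract ((m : ℝ) * α) - Int.floor_add_fract ((e : ℝ) * α)
  by_cases hwrap : t + δ < 1
  · have hfract : Int.fract (((m + e : ℤ) : ℝ) * α) = t + δ := by
      rw [hsum, Int.fract_intCast_add, Int.fract_eq_self]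
      exact ⟨by positivity, hwrap⟩
    -- otherwise `(m + e + 1) α` would lie in `[k, k + δ)` for an integer `k`
    have hiff : 1 - α ≤ t + δ ↔ 1 - α ≤ t := by
      refine ⟨fun h => ?_, fun h => by linarith⟩
      by_contra! hlt
      have := distToInt_le (((m + e + 1 : ℤ) : ℝ) * α) (⌊(m : ℝ) * α⌋ + ⌊(e : ℝ) * α⌋ + 1)
      rw [show ((m + e + 1 : ℤ) : ℝ) * α - ((⌊(m : ℝ) * α⌋ + ⌊(e : ℝ) * α⌋ + 1 : ℤ) : ℝ)
          = t + δ + α - 1 by push_cast at hsum ⊢; linarith,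
        abs_of_nonneg (by linarith)] at this
      linarith
    rw [sturmianSeq_eq_ite hα, sturmianSeq_eq_ite hα, hfract]
    simp only [hiff]
    rfl
  · -- here `(m + e) α` lies in `[k, k + δ)` for an integer `k`
    have := distToInt_le (((m + e : ℤ) : ℝ) * α) (⌊(m : ℝ) * α⌋ + ⌊(e : ℝ) * α⌋ + 1)
    rw [show ((m + e : ℤ) : ℝ) * α - ((⌊(m : ℝ) * α⌋ + ⌊(e : ℝ) * α⌋ + 1 : ℤ) : ℝ)
        = t + δ - 1 by push_cast at hsum ⊢; linarith,
      abs_of_nonneg (by linarith)] at this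
    linarith

theorem sturmianSeq_add_mul_eq (hα : α ∈ Set.Ioo (0 : ℝ) 1) {n e i j : ℤ} (hij : i ≤ j)
    (h : ∀ u, i < u → u ≤ j → Int.fract (e * α) < distToInt ((n + u * e : ℤ) * α) ∧
      Int.fract (e * α) < distToInt ((n + u * e + 1 : ℤ) * α)) :
    sturmianSeq α (n + i * e) = sturmianSeq α (n + j * e) := by
  induction j, hij using Int.leInduction with
  | base => rfl
  | succ j hij ih =>
    obtain ⟨h₁, h₂⟩ := h (j + 1) (by omega) le_rfl
    rw [ih fun u hu hu' => h u hu (by omega), add_one_mul, ← add_assoc]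
    rw [add_one_mul, ← add_assoc] at h₁ h₂
    exact (sturmianSeq_add_eq hα h₁ h₂).symm

theorem sturmianSeq_mul_eq_zero (hα : α ∈ Set.Ioo (0 : ℝ) 1) {e v : ℤ} (hv : 0 ≤ v)
    (hsmall : v * Int.fract (e * α) < 1 - α) : sturmianSeq α (v * e) = 0 := by
  have hfract : Int.fract (((v * e : ℤ) : ℝ) * α) = v * Int.fract (e * α) := by
    rw [Int.fract_eq_iff]
    refine ⟨mul_nonneg (by exact_mod_cast hv) (Int.fract_nonneg _), by linarith [hα.1],
      v * ⌊(e : ℝ) * α⌋, ?_⟩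
    push_cast
    linear_combination -(v : ℝ) * Int.floor_add_fract ((e : ℝ) * α)
  rw [sturmianSeq_eq_ite hα, hfract, if_neg (not_le.2 hsmall)]

theorem sturmianSeq_neg_eq_one (hα : α ∈ Set.Ioo (0 : ℝ) 1) {e : ℤ}
    (h₀ : Int.fract (e * α) ≠ 0) (h : Int.fract (e * α) ≤ α) : sturmianSeq α (-e) = 1 := by
  rw [sturmianSeq_eq_ite hα, Int.cast_neg, neg_mul, Int.fract_neg h₀, if_pos (by linarith)]

section Shift

variable {e : ℤ} {K : ℕ}

theorem sturmianSeq_neg_ne_mul (hα : α ∈ Set.Ioo (0 : ℝ) 1) (h₀ : Int.fract (e * α) ≠ 0)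
    (hδα : Int.fract (e * α) ≤ α) (hKδ : K * Int.fract (e * α) < 1 - α) {v : ℤ} (hv : 0 ≤ v)
    (hvK : v ≤ K) : sturmianSeq α (-e) ≠ sturmianSeq α (v * e) := by
  have hsmall : v * Int.fract (e * α) < 1 - α := by
    have : (v : ℝ) ≤ K := by exact_mod_cast hvK
    nlinarith [Int.fract_nonneg ((e : ℝ) * α)]
  rw [sturmianSeq_neg_eq_one hα h₀ hδα, sturmianSeq_mul_eq_zero hα hv hsmall]
  decide

theorem sturmianSeq_add_mul_eq_of_abs_le (hα : α ∈ Set.Ioo (0 : ℝ) 1)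
    (hgap : ∀ k : ℤ, |e| < |k| → |k| ≤ 3 * K * |e| → Int.fract (e * α) < distToInt (k * α))
    {n i j : ℤ} (hn : |n| + 2 ≤ K * |e|) (hi : K ≤ i) (hij : i ≤ j) (hj : j ≤ 2 * K) :
    sturmianSeq α (n + i * e) = sturmianSeq α (n + j * e) := by
  refine sturmianSeq_add_mul_eq hα hij fun u hiu huj => ?_
  -- the positions `n + u e` and `n + u e + 1` stay between `|e|` and `3 K |e|` away from `0`
  have hue : |u * e| = u * |e| := by rw [abs_mul, abs_of_nonneg (by omega)]
  have hlow : 0 ≤ (u - K - 1) * |e| := mul_nonneg (by omega) (abs_nonneg e)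
  have hupp : 0 ≤ (2 * K - u) * |e| := mul_nonneg (by omega) (abs_nonneg e)
  have h₁ := abs_add_le n (u * e)
  have h₂ := abs_sub (n + u * e) n
  have h₃ := abs_add_le (n + u * e) 1
  have h₄ := abs_sub (n + u * e + 1) 1
  simp only [add_sub_cancel_left, add_sub_cancel_right, abs_one] at h₂ h₃ h₄
  exact ⟨hgap _ (by linarith) (by linarith), hgap _ (by linarith) (by linarith)⟩


theorem combDist_shift_le (hα : α ∈ Set.Ioo (0 : ℝ) 1)
    (hgap : ∀ k : ℤ, |e| < |k| → |k| ≤ 3 * K * |e| → Int.fract (e * α) < distToInt (k * α))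
    (hK : 0 < K) (he : e ≠ 0) {i j : ℤ} (hi : K ≤ i) (hi' : i ≤ 2 * K) (hj : K ≤ j)
    (hj' : j ≤ 2 * K) :
    combDist (fun m => sturmianSeq α (m + i * e)) (fun m => sturmianSeq α (m + j * e)) ≤
      1 / (K * e.natAbs) := by
  have hpos : 1 ≤ K * e.natAbs := Nat.one_le_iff_ne_zero.2 <|
    mul_ne_zero hK.ne' (Int.natAbs_ne_zero.2 he)
  have hN : ((K * e.natAbs - 1 : ℕ) : ℝ) + 1 = K * e.natAbs := by
    exact_mod_cast Nat.sub_add_cancel hpos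
  rw [← hN]
  refine combDist_le_of_eqOn fun n hn => ?_
  have hn' : |n| + 2 ≤ K * |e| := by
    rw [Set.mem_Ioo, Nat.cast_sub hpos, Nat.cast_mul, Int.natCast_natAbs, Nat.cast_one] at hn
    linarith [abs_lt.2 hn]
  rcases le_total i j with hij | hji
  · exact sturmianSeq_add_mul_eq_of_abs_le hα hgap hn' hi hij hj'
  · exact (sturmianSeq_add_mul_eq_of_abs_le hα hgap hn' hj hji hi').symm

end Shift

theorem exists_shift_of_not_boundedType (hα : α ∈ Set.Ioo (0 : ℝ) 1) (hirr : Irrational α)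
    (hnbt : ∀ ε : ℝ, 0 < ε → ∃ p q : ℤ, 1 ≤ q ∧ |α - (p : ℝ) / (q : ℝ)| ≤ ε / (q : ℝ) ^ 2)
    (K : ℕ) :
    ∃ e : ℤ, Int.fract (e * α) ≠ 0 ∧ Int.fract (e * α) ≤ α ∧ K * Int.fract (e * α) < 1 - α ∧
      ∀ k : ℤ, |e| < |k| → |k| ≤ 3 * K * |e| → Int.fract (e * α) < distToInt (k * α) := by
  set μ := min α (1 - α)
  have hμ : 0 < μ := lt_min hα.1 (sub_pos.2 hα.2)
  have hμα : μ ≤ α := min_le_left _ _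
  have hμα' : μ ≤ 1 - α := min_le_right _ _
  set ε := μ / (3 * K + 1)
  have hε : 0 < ε := by positivity
  have hεμ : (3 * K + 1) * ε = μ := mul_div_cancel₀ μ (by positivity)
  obtain ⟨p, q, hq, happrox⟩ := hnbt ε hε
  have hq' : (1 : ℝ) ≤ q := by exact_mod_cast hq
  have hqα : |q * α - p| ≤ ε / q := by
    rw [show (q : ℝ) * α - p = q * (α - p / q) by field_simp, abs_mul, abs_of_pos (by linarith),
      le_div_iff₀ (by linarith)]
    calc (q : ℝ) * |α - p / q| * q = q ^ 2 * |α - p / q| := by ring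
      _ ≤ q ^ 2 * (ε / q ^ 2) := by gcongr
      _ = ε := by field_simp
  obtain ⟨e, he, hδ⟩ := exists_abs_eq_fract_mul_le hqα
  set δ := Int.fract ((e : ℝ) * α)
  have he' : |(e : ℝ)| = q := by rw [← Int.cast_abs, he, abs_of_pos (by omega)]
  have hδ₀ : δ ≠ 0 := by
    rw [Ne, Int.fract_eq_zero_iff]
    rintro ⟨z, hz⟩
    exact (hirr.intCast_mul (by rintro rfl; have := abs_eq_zero.1 he.symm; omega)).ne_int z hz.symm
  have hδpos : 0 < δ := (Int.fract_nonneg _).lt_of_ne' hδ₀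
  have hqδ : |(e : ℝ)| * δ ≤ ε := by
    rw [he']; rwa [le_div_iff₀ (by linarith), mul_comm] at hδ
  have hδε : δ ≤ ε := by nlinarith
  refine ⟨e, hδ₀, by nlinarith, by nlinarith, fun k hk hk' => ?_⟩
  have hk'' : |(k : ℝ)| ≤ 3 * K * |(e : ℝ)| := by exact_mod_cast hk'
  have hδeq : distToInt (e * α) = δ := distToInt_eq_fract (by nlinarith)
  show δ < distToInt (k * α)
  rw [← hδeq]
  refine distToInt_lt_distToInt_mul α hk (hδeq ▸ hδpos) ?_
  calc (|(k : ℝ)| + |(e : ℝ)|) * distToInt (e * α) ≤ (3 * K + 1) * (|(e : ℝ)| * δ) := by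
        rw [hδeq]; nlinarith
    _ ≤ (3 * K + 1) * ε := by gcongr
    _ < 1 := by linarith

theorem exists_sturmianSubshift_family (hα : α ∈ Set.Ioo (0 : ℝ) 1) (hirr : Irrational α)
    (hnbt : ∀ ε : ℝ, 0 < ε → ∃ p q : ℤ, 1 ≤ q ∧ |α - (p : ℝ) / (q : ℝ)| ≤ ε / (q : ℝ) ^ 2)
    {K : ℕ} (hK : 0 < K) :
    ∃ (y : Fin (K + 1) → sturmianSubshift α) (a : ℝ), 0 < a ∧
      (∀ s t, combDist (y s : ℤ → Fin 2) (y t) ≤ 3 * a) ∧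
      Pairwise (fun s t => a ≤ combDist (y s : ℤ → Fin 2) (y t)) := by
  obtain ⟨e, hδ₀, hδα, hKδ, hgap⟩ := exists_shift_of_not_boundedType hα hirr hnbt K
  have he : e ≠ 0 := by rintro rfl; simp at hδ₀
  have hQ : (1 : ℝ) ≤ e.natAbs := by exact_mod_cast Int.natAbs_pos.2 he
  let y : Fin (K + 1) → sturmianSubshift α := fun s =>
    ⟨fun m => sturmianSeq α (m + (K + s : ℤ) * e), subset_closure ⟨_, rfl⟩⟩
  have hfar : ∀ s t : Fin (K + 1), s < t →
      ∃ n : ℤ, |(n : ℝ)| ≤ 2 * K * e.natAbs ∧ (y s : ℤ → Fin 2) n ≠ (y t : ℤ → Fin 2) n := by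
    intro s t hst
    have hst' : (s : ℕ) < t := hst
    refine ⟨-(K + s + 1) * e, ?_, ?_⟩
    · have : (s : ℝ) + 1 ≤ K := by exact_mod_cast (by omega : (s : ℕ) + 1 ≤ K)
      push_cast
      rw [abs_mul, abs_neg, abs_of_pos (by positivity), Nat.cast_natAbs, Int.cast_abs]
      nlinarith [abs_nonneg (e : ℝ)]
    · show sturmianSeq α (-(K + s + 1) * e + (K + s) * e) ≠
        sturmianSeq α (-(K + s + 1) * e + (K + t) * e)
      rw [show -(K + s + 1) * e + (K + s) * e = -e by ring,
        show -(K + s + 1) * e + (K + t) * e = (t - s - 1) * e by ring]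
      exact sturmianSeq_neg_ne_mul hα hδ₀ hδα hKδ (by omega) (by omega)
  refine ⟨y, 1 / (2 * K * e.natAbs + 1), by positivity, fun s t => ?_, fun s t hst => ?_⟩
  · have hK' : (1 : ℝ) ≤ K := by exact_mod_cast hK
    calc combDist (y s : ℤ → Fin 2) (y t) ≤ 1 / (K * e.natAbs) :=
          combDist_shift_le hα hgap hK he (by omega) (by omega) (by omega) (by omega)
      _ ≤ 3 * (1 / (2 * K * e.natAbs + 1)) := by
          rw [mul_one_div, div_le_div_iff₀ (by positivity) (by positivity)]
          nlinarith
  · rcases hst.lt_or_gt with h | h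
    · obtain ⟨n, hn, hne⟩ := hfar s t h
      exact le_trans (by gcongr) (one_div_le_combDist hne)
    · obtain ⟨n, hn, hne⟩ := hfar t s h
      exact le_trans (by gcongr) (one_div_le_combDist hne.symm)

end Sturmian

/-- If `α ∈ (0,1)` is irrational and not of bounded type (for every `ε > 0`
there are integers `p`, `q ≥ 1` with `|α − p/q| ≤ ε/q²`), then the Sturmian
subshift `Ξ(α)` with the combinatorial metric is not f-embeddable. -/
theorem sturmian_not_fEmbeddable_of_not_boundedType (α : ℝ)
    (hα : α ∈ Set.Ioo (0 : ℝ) 1) (hirr : Irrational α)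
    (hnbt : ∀ ε : ℝ, 0 < ε → ∃ p q : ℤ, 1 ≤ q ∧
      |α - (p : ℝ) / (q : ℝ)| ≤ ε / (q : ℝ) ^ 2) :
    ¬ FEmbeddableSubshift (sturmianSubshift α) := by
  intro hemb
  obtain ⟨N, hN⟩ := hemb.exists_card_le 3
  obtain ⟨y, a, ha, hdiam, hsep⟩ := exists_sturmianSubshift_family hα hirr hnbt N.succ_pos
  have := hN (N + 1) y ha hdiam hsep
  omega
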